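/- arXiv:1306.6146 — 4 statements merged into one kernel-verified Lean document; each statement's English description precedes it below -/
import Mathlib

section
/- There exist absolute constants a ≥ 1 and b ≥ 0 such that for every finite connected simple graph G in which every vertex has degree 3, there exists a finite connected simple graph H in which every vertex has degree 3 and whose girth is at least 6, together with a map f from the vertices of G to the vertices of H satisfying (1/a)·d_G(x,y) − b ≤ d_H(f(x),f(y)) ≤ a·d_G(x,y) + b for all vertices x, y of G, and such that every vertex of H is within graph distance b of the image of f. -/
/-!
Replace each vertex of `G` by a copy of a fixed 13-vertex gadget of girth 6 having three
degree-2 ports, and each edge `uv` by an edge joining a port of the copy of `u` to a port of the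
copy of `v`, using every port exactly once. The result `H` is cubic. Sending `v` to a fixed
vertex of its copy is a quasi-isometry: collapsing the copies is 1-Lipschitz, an edge of `G`
lifts to a path of length at most `12 + 1 + 12` through two copies, and every vertex of `H` is
within `12` of the base point of its copy. A cycle of `H` of length at most 5 cannot stay in
one copy, which has girth 6, and cannot leave it either: it would contain two connecting edges,
which are then either consecutive, impossible since a port carries only one, or join the same
two copies and hence coincide.
-/

open Finset

namespace SimpleGraph

variable {V W : Type*} {G : SimpleGraph V} {H : SimpleGraph W}

lemma exists_walk_length_le_mul_of_forall_adj {f : V → W} {C : ℕ}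
    (hf : ∀ u v, G.Adj u v → ∃ q : H.Walk (f u) (f v), q.length ≤ C) {x y : V}
    (p : G.Walk x y) : ∃ q : H.Walk (f x) (f y), q.length ≤ C * p.length := by
  induction p with
  | nil => exact ⟨.nil, by simp⟩
  | cons h _ ih =>
    obtain ⟨q₁, hq₁⟩ := hf _ _ h
    obtain ⟨q₂, hq₂⟩ := ih
    refine ⟨q₁.append q₂, ?_⟩
    rw [Walk.length_append, Walk.length_cons, mul_add_one]
    omega

lemma dist_le_mul_dist_of_forall_adj {f : V → W} {C : ℕ}
    (hf : ∀ u v, G.Adj u v → ∃ q : H.Walk (f u) (f v), q.length ≤ C) {x y : V}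
    (hxy : G.Reachable x y) : H.dist (f x) (f y) ≤ C * G.dist x y := by
  obtain ⟨p, hp⟩ := hxy.exists_walk_length_eq_dist
  obtain ⟨q, hq⟩ := exists_walk_length_le_mul_of_forall_adj hf p
  exact (dist_le q).trans (hp ▸ hq)

end SimpleGraph

lemma Set.exists_bijOn_fin_of_ncard_eq {α : Type*} {s : Set α} {n : ℕ} [NeZero n]
    (hs : s.ncard = n) : ∃ f : α → Fin n, Set.BijOn f s Set.univ := by
  classical
  have : Finite s := (Set.finite_of_ncard_ne_zero (hs ▸ NeZero.ne n)).to_subtype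
  let e : s ≃ Fin n := Finite.equivFinOfCardEq hs
  refine ⟨fun x => if h : x ∈ s then e ⟨x, h⟩ else 0, Set.mapsTo_univ _ _, ?_, ?_⟩
  · intro x hx y hy hxy
    simpa [hx, hy] using hxy
  · intro k _
    exact ⟨e.symm k, (e.symm k).2, by simp⟩

namespace CubicGirthSix

open SimpleGraph

/-- The path `0 - 1 - ⋯ - 12` with six chords of odd length: a bipartite graph of girth 6 in
which the three ports `0, 8, 12` have degree 2 and all other vertices degree 3. -/
def gadget : SimpleGraph (Fin 13) :=
  SimpleGraph.fromRel fun s t =>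
    s.val + 1 = t.val ∨ (s.val, t.val) ∈ [(0, 5), (2, 7), (4, 9), (6, 11), (10, 1), (12, 3)]

instance : DecidableRel gadget.Adj := fun s t =>
  inferInstanceAs (Decidable ((SimpleGraph.fromRel _).Adj s t))

def port : Fin 3 → Fin 13 := ![0, 8, 12]

lemma port_injective : Function.Injective port := by decide

lemma gadget_adj_parity : ∀ s t, gadget.Adj s t → s.val % 2 ≠ t.val % 2 := by decide

lemma gadget_eq_or_eq_of_square : ∀ a b c d, gadget.Adj a b → gadget.Adj b c →
    gadget.Adj c d → gadget.Adj d a → a = c ∨ b = d := by decide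

lemma gadget_degree_add_card_port : ∀ s, gadget.degree s + #{k | port k = s} = 3 := by decide

lemma gadget_exists_walk_to_zero (s : Fin 13) : ∃ p : gadget.Walk s 0, p.length = s.val := by
  obtain ⟨n, hn⟩ := s
  induction n with
  | zero => exact ⟨.nil, rfl⟩
  | succ n ih =>
    obtain ⟨p, hp⟩ := ih (by omega)
    have h : gadget.Adj ⟨n + 1, hn⟩ ⟨n, by omega⟩ := by
      rw [gadget, fromRel_adj]
      exact ⟨by simp, Or.inr (Or.inl rfl)⟩
    exact ⟨.cons h p, by simp [hp]⟩

variable {V : Type*} (G : SimpleGraph V) (lbl : V → V → Fin 3)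

def Cross (w x : V × Fin 13) : Prop :=
  G.Adj w.1 x.1 ∧ w.2 = port (lbl w.1 x.1) ∧ x.2 = port (lbl x.1 w.1)

def Internal (w x : V × Fin 13) : Prop := w.1 = x.1 ∧ gadget.Adj w.2 x.2

variable {G lbl}

lemma Cross.symm {w x : V × Fin 13} (h : Cross G lbl w x) : Cross G lbl x w :=
  ⟨h.1.symm, h.2.2, h.2.1⟩

lemma Cross.fst_ne {w x : V × Fin 13} (h : Cross G lbl w x) : w.1 ≠ x.1 := h.1.ne

lemma Cross.eq_of_cross (hlbl : ∀ u, Set.InjOn (lbl u) (G.neighborSet u))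
    {w x y : V × Fin 13} (hx : Cross G lbl w x) (hy : Cross G lbl w y) : x = y := by
  have h1 : x.1 = y.1 := hlbl w.1 hx.1 hy.1 (port_injective (hx.2.1.symm.trans hy.2.1))
  exact Prod.ext h1 (by rw [hx.2.2, hy.2.2, h1])

lemma Cross.eq_of_fst_eq {w x w' x' : V × Fin 13} (h : Cross G lbl w x)
    (h' : Cross G lbl w' x') (hw : w.1 = w'.1) (hx : x.1 = x'.1) : w = w' :=
  Prod.ext hw (by rw [h.2.1, h'.2.1, hw, hx])

lemma Internal.symm {w x : V × Fin 13} (h : Internal w x) : Internal x w :=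
  ⟨h.1.symm, h.2.symm⟩

lemma Internal.parity {w x : V × Fin 13} (h : Internal w x) : w.2.val % 2 ≠ x.2.val % 2 :=
  gadget_adj_parity _ _ h.2

variable (G lbl) in
/-- `lbl u v` is the port of the copy of `u` used by the edge `uv`; `lbl u` is meant to number
the neighbours of `u` by `Fin 3`. -/
def blowup : SimpleGraph (V × Fin 13) where
  Adj w x := Internal w x ∨ Cross G lbl w x
  symm := ⟨fun _ _ => Or.imp Internal.symm Cross.symm⟩
  loopless := ⟨fun _ => Or.rec (fun h => h.2.ne rfl) (fun h => h.fst_ne rfl)⟩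

/- Case split on which edges of the cycle are internal. All internal: parity or
`gadget_eq_or_eq_of_square`; one cross edge: `Cross.fst_ne`; two consecutive cross edges:
`Cross.eq_of_cross`; two non-consecutive ones: `Cross.eq_of_fst_eq`. -/
lemma false_of_blowup_triangle (hlbl : ∀ u, Set.InjOn (lbl u) (G.neighborSet u))
    {a b c : V × Fin 13} (hab : (blowup G lbl).Adj a b) (hbc : (blowup G lbl).Adj b c)
    (hca : (blowup G lbl).Adj c a) : False := by
  have hba := hab.ne.symm
  have hcb := hbc.ne.symm
  have hac := hca.ne.symm
  rcases hab with i₁ | c₁ <;> rcases hbc with i₂ | c₂ <;> rcases hca with i₃ | c₃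
  all_goals first
    | (have := i₁.parity; have := i₂.parity; have := i₃.parity; omega)
    | exact c₁.fst_ne (i₂.1.trans i₃.1).symm
    | exact c₂.fst_ne (i₃.1.trans i₁.1).symm
    | exact c₃.fst_ne (i₁.1.trans i₂.1).symm
    | exact hac (c₁.symm.eq_of_cross hlbl c₂)
    | exact hba (c₂.symm.eq_of_cross hlbl c₃)
    | exact hcb (c₃.symm.eq_of_cross hlbl c₁)

lemma false_of_blowup_square (hlbl : ∀ u, Set.InjOn (lbl u) (G.neighborSet u))
    {a b c d : V × Fin 13} (hab : (blowup G lbl).Adj a b) (hbc : (blowup G lbl).Adj b c)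
    (hcd : (blowup G lbl).Adj c d) (hda : (blowup G lbl).Adj d a) (hac : a ≠ c) (hbd : b ≠ d) :
    False := by
  have hab' := hab.ne
  have hda' := hda.ne
  rcases hab with i₁ | c₁ <;> rcases hbc with i₂ | c₂ <;> rcases hcd with i₃ | c₃ <;>
    rcases hda with i₄ | c₄
  all_goals first
    | exact (gadget_eq_or_eq_of_square _ _ _ _ i₁.2 i₂.2 i₃.2 i₄.2).elim
        (fun h => hac (Prod.ext (i₁.1.trans i₂.1) h)) (fun h => hbd (Prod.ext (i₂.1.trans i₃.1) h))
    | exact c₁.fst_ne ((i₂.1.trans i₃.1).trans i₄.1).symm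
    | exact c₂.fst_ne ((i₃.1.trans i₄.1).trans i₁.1).symm
    | exact c₃.fst_ne ((i₄.1.trans i₁.1).trans i₂.1).symm
    | exact c₄.fst_ne ((i₁.1.trans i₂.1).trans i₃.1).symm
    | exact hac (c₁.symm.eq_of_cross hlbl c₂)
    | exact hbd (c₂.symm.eq_of_cross hlbl c₃)
    | exact hac (c₃.symm.eq_of_cross hlbl c₄).symm
    | exact hbd (c₄.symm.eq_of_cross hlbl c₁).symm
    | exact hda' (c₁.eq_of_fst_eq c₃.symm i₄.1.symm i₂.1).symm
    | exact hab' (c₂.eq_of_fst_eq c₄.symm i₁.1.symm i₃.1).symm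

lemma false_of_blowup_pentagon (hlbl : ∀ u, Set.InjOn (lbl u) (G.neighborSet u))
    {a b c d e : V × Fin 13} (hab : (blowup G lbl).Adj a b) (hbc : (blowup G lbl).Adj b c)
    (hcd : (blowup G lbl).Adj c d) (hde : (blowup G lbl).Adj d e) (hea : (blowup G lbl).Adj e a)
    (hac : a ≠ c) (hbd : b ≠ d) (hce : c ≠ e) (hda : d ≠ a) (heb : e ≠ b) : False := by
  rcases hab with i₁ | c₁ <;> rcases hbc with i₂ | c₂ <;> rcases hcd with i₃ | c₃ <;>
    rcases hde with i₄ | c₄ <;> rcases hea with i₅ | c₅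
  all_goals first
    | (have := i₁.parity; have := i₂.parity; have := i₃.parity; have := i₄.parity;
       have := i₅.parity; omega)
    | exact c₁.fst_ne (((i₂.1.trans i₃.1).trans i₄.1).trans i₅.1).symm
    | exact c₂.fst_ne (((i₃.1.trans i₄.1).trans i₅.1).trans i₁.1).symm
    | exact c₃.fst_ne (((i₄.1.trans i₅.1).trans i₁.1).trans i₂.1).symm
    | exact c₄.fst_ne (((i₅.1.trans i₁.1).trans i₂.1).trans i₃.1).symm
    | exact c₅.fst_ne (((i₁.1.trans i₂.1).trans i₃.1).trans i₄.1).symm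
    | exact hac (c₁.symm.eq_of_cross hlbl c₂)
    | exact hbd (c₂.symm.eq_of_cross hlbl c₃)
    | exact hce (c₃.symm.eq_of_cross hlbl c₄)
    | exact hda (c₄.symm.eq_of_cross hlbl c₅)
    | exact heb (c₅.symm.eq_of_cross hlbl c₁)
    | exact hda (c₁.eq_of_fst_eq c₃.symm (i₄.1.trans i₅.1).symm i₂.1).symm
    | exact heb (c₂.eq_of_fst_eq c₄.symm (i₅.1.trans i₁.1).symm i₃.1).symm
    | exact hac (c₃.eq_of_fst_eq c₅.symm (i₁.1.trans i₂.1).symm i₄.1).symm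
    | exact hbd (c₄.eq_of_fst_eq c₁.symm (i₂.1.trans i₃.1).symm i₅.1).symm
    | exact hce (c₅.eq_of_fst_eq c₂.symm (i₃.1.trans i₄.1).symm i₁.1).symm

lemma le_egirth_blowup (hlbl : ∀ u, Set.InjOn (lbl u) (G.neighborSet u)) :
    6 ≤ (blowup G lbl).egirth := by
  rw [le_egirth]
  intro a p hp
  by_contra! hlt
  have hlen : p.length < 6 := by exact_mod_cast hlt
  have h3 := hp.three_le_length
  set v := p.getVert
  have hadj (i : ℕ) (hi : i + 1 < p.length) : (blowup G lbl).Adj (v i) (v (i + 1)) :=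
    p.adj_getVert_succ (by omega)
  have hlast : (blowup G lbl).Adj (v (p.length - 1)) (v 0) := by
    rw [show v 0 = a from p.getVert_zero]
    have h := p.adj_getVert_succ (i := p.length - 1) (by omega)
    rwa [Nat.sub_add_cancel (by omega), Walk.getVert_length] at h
  have hne (i j : ℕ) (hi : i < p.length) (hj : j < p.length) (hij : i ≠ j) : v i ≠ v j :=
    fun h => hij (hp.getVert_injOn' (by simp only [Set.mem_ofPred_eq]; omega)
      (by simp only [Set.mem_ofPred_eq]; omega) h)
  obtain h | h | h : p.length = 3 ∨ p.length = 4 ∨ p.length = 5 := by omega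
  all_goals simp only [h] at hadj hlast hne
  · exact false_of_blowup_triangle hlbl (hadj 0 (by omega)) (hadj 1 (by omega)) hlast
  · exact false_of_blowup_square hlbl (hadj 0 (by omega)) (hadj 1 (by omega)) (hadj 2 (by omega))
      hlast (hne 0 2 (by omega) (by omega) (by omega)) (hne 1 3 (by omega) (by omega) (by omega))
  · exact false_of_blowup_pentagon hlbl (hadj 0 (by omega)) (hadj 1 (by omega)) (hadj 2 (by omega))
      (hadj 3 (by omega)) hlast (hne 0 2 (by omega) (by omega) (by omega))
      (hne 1 3 (by omega) (by omega) (by omega)) (hne 2 4 (by omega) (by omega) (by omega))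
      (hne 3 0 (by omega) (by omega) (by omega)) (hne 4 1 (by omega) (by omega) (by omega))

lemma blowup_neighborSet (u : V) (s : Fin 13) :
    (blowup G lbl).neighborSet (u, s) =
      Prod.mk u '' gadget.neighborSet s ∪
        (fun v => (v, port (lbl v u))) '' {v ∈ G.neighborSet u | port (lbl u v) = s} := by
  ext ⟨v, t⟩
  simp only [mem_neighborSet, blowup, Internal, Cross, Set.mem_union, Set.mem_image,
    Set.mem_ofPred_eq, Prod.mk.injEq]
  constructor
  · rintro (⟨rfl, h⟩ | ⟨h, rfl, rfl⟩)
    · exact Or.inl ⟨t, h, rfl, rfl⟩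
    · exact Or.inr ⟨v, ⟨h, rfl⟩, rfl, rfl⟩
  · rintro (⟨t, h, rfl, rfl⟩ | ⟨v, ⟨h, rfl⟩, rfl, rfl⟩)
    · exact Or.inl ⟨rfl, h⟩
    · exact Or.inr ⟨h, rfl, rfl⟩

lemma ncard_neighborSet_blowup (hlbl : ∀ u, Set.BijOn (lbl u) (G.neighborSet u) Set.univ)
    (w : V × Fin 13) : ((blowup G lbl).neighborSet w).ncard = 3 := by
  obtain ⟨u, s⟩ := w
  set S := {v ∈ G.neighborSet u | port (lbl u v) = s}
  have hSsub : S ⊆ G.neighborSet u := fun _ hv => hv.1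
  have hSfin : S.Finite := (Set.Finite.of_finite_image
    (by rw [(hlbl u).image_eq]; exact Set.finite_univ) (hlbl u).injOn).subset hSsub
  have hS : S.ncard = #{k | port k = s} := by
    have himage : lbl u '' S = {k | port k = s} := by
      rw [show S = G.neighborSet u ∩ lbl u ⁻¹' {k | port k = s} from rfl,
        Set.image_inter_preimage, (hlbl u).image_eq, Set.univ_inter]
    rw [← ((hlbl u).injOn.mono hSsub).ncard_image, himage, ← Set.ncard_coe_finset,
      Finset.coe_filter_univ]
  have hdisj : Disjoint (Prod.mk u '' gadget.neighborSet s)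
      ((fun v => (v, port (lbl v u))) '' S) := by
    rw [Set.disjoint_iff]
    rintro _ ⟨⟨t, -, rfl⟩, ⟨v, hv, hvt⟩⟩
    exact hv.1.ne (congrArg Prod.fst hvt).symm
  rw [blowup_neighborSet, Set.ncard_union_eq hdisj (Set.toFinite _) (hSfin.image _),
    Set.ncard_image_of_injective _ (Prod.mk_right_injective u),
    Set.ncard_image_of_injective _ (fun _ _ h => congrArg Prod.fst h), hS,
    ← Nat.card_coe_set_eq, Nat.card_eq_fintype_card, card_neighborSet_eq_degree,
    gadget_degree_add_card_port]

variable (G lbl) in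
def gadgetHom (u : V) : gadget →g blowup G lbl where
  toFun := Prod.mk u
  map_rel' h := Or.inl ⟨rfl, h⟩

lemma exists_blowup_walk_to_base (u : V) (s : Fin 13) :
    ∃ p : (blowup G lbl).Walk (u, s) (u, 0), p.length ≤ 12 := by
  obtain ⟨p, hp⟩ := gadget_exists_walk_to_zero s
  exact ⟨p.map (gadgetHom G lbl u), (p.length_map _).trans_le (hp ▸ s.is_le)⟩

lemma exists_blowup_walk_of_adj {u v : V} (huv : G.Adj u v) :
    ∃ q : (blowup G lbl).Walk (u, 0) (v, 0), q.length ≤ 25 := by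
  obtain ⟨p₁, h₁⟩ := exists_blowup_walk_to_base (G := G) (lbl := lbl) u (port (lbl u v))
  obtain ⟨p₂, h₂⟩ := exists_blowup_walk_to_base (G := G) (lbl := lbl) v (port (lbl v u))
  have hcross : (blowup G lbl).Adj (u, port (lbl u v)) (v, port (lbl v u)) :=
    Or.inr ⟨huv, rfl, rfl⟩
  refine ⟨p₁.reverse.append (.cons hcross p₂), ?_⟩
  rw [Walk.length_append, Walk.length_reverse, Walk.length_cons]
  omega

lemma exists_walk_fst_of_blowup_adj {w x : V × Fin 13} (h : (blowup G lbl).Adj w x) :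
    ∃ p : G.Walk w.1 x.1, p.length ≤ 1 := by
  rcases h with h | h
  · exact ⟨Walk.nil.copy rfl h.1, by simp⟩
  · exact ⟨h.1.toWalk, by simp⟩

lemma reachable_blowup {x y : V} (hxy : G.Reachable x y) :
    (blowup G lbl).Reachable (x, 0) (y, 0) :=
  hxy.elim fun p =>
    (exists_walk_length_le_mul_of_forall_adj (fun _ _ => exists_blowup_walk_of_adj) p).elim
      fun q _ => ⟨q⟩

lemma blowup_connected (hG : G.Connected) : (blowup G lbl).Connected := by
  have hfiber (u : V) (s : Fin 13) : (blowup G lbl).Reachable (u, s) (u, 0) :=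
    (exists_blowup_walk_to_base u s).elim fun p _ => ⟨p⟩
  rw [connected_iff]
  refine ⟨?_, hG.nonempty.map (·, 0)⟩
  rintro ⟨u, s⟩ ⟨v, t⟩
  exact ((hfiber u s).trans (reachable_blowup (hG.preconnected u v))).trans (hfiber v t).symm

lemma dist_le_blowup_dist {x y : V} (hxy : G.Reachable x y) :
    G.dist x y ≤ (blowup G lbl).dist (x, 0) (y, 0) := by
  simpa using dist_le_mul_dist_of_forall_adj (C := 1) (f := Prod.fst)
    (fun _ _ => exists_walk_fst_of_blowup_adj) (reachable_blowup hxy)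

lemma blowup_dist_le {x y : V} (hxy : G.Reachable x y) :
    (blowup G lbl).dist (x, 0) (y, 0) ≤ 25 * G.dist x y :=
  dist_le_mul_dist_of_forall_adj (fun _ _ => exists_blowup_walk_of_adj) hxy

lemma blowup_dist_base_le (u : V) (s : Fin 13) : (blowup G lbl).dist (u, 0) (u, s) ≤ 12 :=
  (exists_blowup_walk_to_base u s).elim fun p hp =>
    (dist_le p.reverse).trans (p.length_reverse ▸ hp)

end CubicGirthSix

open CubicGirthSix SimpleGraph

/-- There exist absolute constants `a ≥ 1` and `b ≥ 0` such that every finite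
connected trivalent (cubic) simple graph `G` admits an `(a,b)`-quasi-isometry to some finite
connected trivalent simple graph `H` of girth at least `6`. -/
theorem trivalent_graph_quasi_isometric_to_girth_six :
    ∃ a : ℝ, 1 ≤ a ∧ ∃ b : ℝ, 0 ≤ b ∧
      ∀ (V : Type) [Fintype V] (G : SimpleGraph V),
        G.Connected → (∀ v : V, (G.neighborSet v).ncard = 3) →
        ∃ (W : Type) (_ : Fintype W) (H : SimpleGraph W),
          H.Connected ∧ (∀ w : W, (H.neighborSet w).ncard = 3) ∧
          (6 : ℕ∞) ≤ H.egirth ∧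
          ∃ f : V → W,
            (∀ x y : V,
              (1 / a) * (G.dist x y : ℝ) - b ≤ (H.dist (f x) (f y) : ℝ) ∧
              (H.dist (f x) (f y) : ℝ) ≤ a * (G.dist x y : ℝ) + b) ∧
            (∀ w : W, ∃ x : V, (H.dist (f x) w : ℝ) ≤ b) := by
  refine ⟨25, by norm_num, 12, by norm_num, fun V _ G hG hdeg => ?_⟩
  choose lbl hlbl using fun u => Set.exists_bijOn_fin_of_ncard_eq (hdeg u)
  refine ⟨V × Fin 13, inferInstance, blowup G lbl, blowup_connected hG,
    ncard_neighborSet_blowup hlbl, le_egirth_blowup fun u => (hlbl u).injOn, fun v => (v, 0),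
    fun x y => ?_, fun ⟨u, s⟩ => ⟨u, by exact_mod_cast blowup_dist_base_le u s⟩⟩
  have hlower : (G.dist x y : ℝ) ≤ (blowup G lbl).dist (x, 0) (y, 0) := by
    exact_mod_cast dist_le_blowup_dist (hG.preconnected x y)
  have hupper : ((blowup G lbl).dist (x, 0) (y, 0) : ℝ) ≤ 25 * G.dist x y := by
    exact_mod_cast blowup_dist_le (hG.preconnected x y)
  have hnonneg : (0 : ℝ) ≤ G.dist x y := Nat.cast_nonneg _
  constructor <;> linarith
end

section
/- There exists exactly one pair of positive real numbers (s, b) satisfying the system of equations sinh(s/2)·sinh(s/6) = cosh(b/4) and sinh(s/4)·sinh(b/4) = cosh(s/2). -/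
open Real Set

/-!
Put `c = cosh (s / 6)`, so that `cosh (s / 2) = 4c³ - 3c` and
`sinh² (s / 4) = (cosh (s / 2) - 1) / 2`. The second equation determines `b` from `s`, and
substituting it into the square of the first leaves the polynomial equation `pentagonPoly c = 0`.
In the variable `x = c - 1` this polynomial is `x⁴ · pentagonQuot x`, where the Laurent
polynomial `pentagonQuot` has positive coefficients at the nonnegative powers of `x` and negative
ones at the negative powers, hence is strictly increasing on `(0, ∞)`. So there is at most one
root `c > 1`, and `pentagonPoly 1 < 0 < pentagonPoly 2` provides one.
-/

lemma mul_sinh_eq_iff {a y z : ℝ} (ha : a ≠ 0) : a * sinh y = z ↔ y = arsinh (z / a) := by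
  rw [mul_comm, ← eq_div_iff ha]
  exact ⟨fun h => by rw [← h, arsinh_sinh], fun h => by rw [h, sinh_arsinh]⟩

lemma eq_cosh_iff_sq {p y : ℝ} (hp : 0 ≤ p) : p = cosh y ↔ p ^ 2 = 1 + sinh y ^ 2 := by
  rw [← cosh_sq', pow_left_inj₀ hp (cosh_pos y).le two_ne_zero]

noncomputable def pentagonPoly (c : ℝ) : ℝ :=
  ((4 * c ^ 3 - 3 * c) ^ 2 - 1) * (c ^ 2 - 1) * (4 * c ^ 3 - 3 * c - 1)
    - (4 * c ^ 3 - 3 * c - 1) - 2 * (4 * c ^ 3 - 3 * c) ^ 2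

noncomputable def pentagonQuot (x : ℝ) : ℝ :=
  64 * x ^ 7 + 704 * x ^ 6 + 3312 * x ^ 5 + 8672 * x ^ 4 + 13756 * x ^ 3 + 13420 * x ^ 2
    + 7665 * x + 2052 - 128 / x - 222 / x ^ 2 - 45 / x ^ 3 - 2 / x ^ 4

lemma pentagonPoly_one_add {x : ℝ} (hx : x ≠ 0) :
    pentagonPoly (1 + x) = x ^ 4 * pentagonQuot x := by
  unfold pentagonPoly pentagonQuot
  field_simp
  ring

lemma strictMonoOn_pentagonQuot : StrictMonoOn pentagonQuot (Ioi 0) := by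
  intro x (hx : 0 < x) y _ hxy
  unfold pentagonQuot
  gcongr

lemma eq_of_pentagonPoly_eq_zero {c d : ℝ} (hc : 1 < c) (hd : 1 < d)
    (hc0 : pentagonPoly c = 0) (hd0 : pentagonPoly d = 0) : c = d := by
  have quot_eq_zero {e : ℝ} (he : 1 < e) (he0 : pentagonPoly e = 0) :
      pentagonQuot (e - 1) = 0 := by
    rw [← add_sub_cancel 1 e, pentagonPoly_one_add (by linarith)] at he0
    exact (mul_eq_zero.1 he0).resolve_left (by positivity)
  have := strictMonoOn_pentagonQuot.injOn (sub_pos.2 hc) (sub_pos.2 hd)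
    ((quot_eq_zero hc hc0).trans (quot_eq_zero hd hd0).symm)
  linarith

lemma exists_pentagonPoly_eq_zero : ∃ c, 1 < c ∧ pentagonPoly c = 0 := by
  have hcont : ContinuousOn pentagonPoly (Icc 1 2) := by
    unfold pentagonPoly
    fun_prop
  obtain ⟨c, hc, hc0⟩ := intermediate_value_Ioo (by norm_num) hcont
    (show (0 : ℝ) ∈ Ioo (pentagonPoly 1) (pentagonPoly 2) by norm_num [pentagonPoly])
  exact ⟨c, hc.1, hc0⟩

lemma pentagonPoly_cosh (s : ℝ) :
    pentagonPoly (cosh (s / 6)) =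
      2 * (sinh (s / 2) ^ 2 * sinh (s / 6) ^ 2 * sinh (s / 4) ^ 2 - sinh (s / 4) ^ 2
        - cosh (s / 2) ^ 2) := by
  have h2 : cosh (s / 2) = 4 * cosh (s / 6) ^ 3 - 3 * cosh (s / 6) := by
    rw [← cosh_three_mul]; ring_nf
  have h4 : sinh (s / 4) ^ 2 = (cosh (s / 2) - 1) / 2 := by
    rw [show s / 2 = 2 * (s / 4) by ring, cosh_two_mul, cosh_sq]; ring
  rw [h4, sinh_sq, sinh_sq, h2, pentagonPoly]
  ring

lemma existsUnique_pentagonPoly_cosh_eq_zero :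
    ∃! s : ℝ, 0 < s ∧ pentagonPoly (cosh (s / 6)) = 0 := by
  obtain ⟨c, hc, hc0⟩ := exists_pentagonPoly_eq_zero
  have hcosh : cosh (6 * arcosh c / 6) = c := by
    rw [mul_div_cancel_left₀ _ (by norm_num), cosh_arcosh hc.le]
  refine ⟨6 * arcosh c, ⟨by linarith [arcosh_pos hc], by rwa [hcosh]⟩, ?_⟩
  rintro s ⟨hs, hs0⟩
  have hsc : cosh (s / 6) = c :=
    eq_of_pentagonPoly_eq_zero (one_lt_cosh.2 (by positivity)) hc hs0 hc0
  rw [← hsc, arcosh_cosh (by positivity)]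
  ring

lemma pentagon_system_iff {s b : ℝ} (hs : 0 < s) :
    (0 < b ∧ sinh (s / 2) * sinh (s / 6) = cosh (b / 4) ∧
      sinh (s / 4) * sinh (b / 4) = cosh (s / 2)) ↔
    pentagonPoly (cosh (s / 6)) = 0 ∧ b = 4 * arsinh (cosh (s / 2) / sinh (s / 4)) := by
  have hs4 : 0 < sinh (s / 4) := sinh_pos_iff.2 (by positivity)
  have hprod : 0 < sinh (s / 2) * sinh (s / 6) :=
    mul_pos (sinh_pos_iff.2 (by positivity)) (sinh_pos_iff.2 (by positivity))
  set w := cosh (s / 2) / sinh (s / 4) with hw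
  have hpoly :
      (sinh (s / 2) * sinh (s / 6)) ^ 2 = 1 + w ^ 2 ↔ pentagonPoly (cosh (s / 6)) = 0 := by
    rw [pentagonPoly_cosh, hw]
    field_simp
    constructor <;> intro h <;> linarith
  rw [mul_sinh_eq_iff hs4.ne', eq_cosh_iff_sq hprod.le]
  constructor
  · rintro ⟨-, h1, h2⟩
    rw [h2, sinh_arsinh, hpoly] at h1
    exact ⟨h1, by linarith⟩
  · rintro ⟨h0, rfl⟩
    rw [mul_div_cancel_left₀ _ four_ne_zero, sinh_arsinh, hpoly]
    exact ⟨mul_pos four_pos (arsinh_pos_iff.2 (div_pos (cosh_pos _) hs4)), h0, rfl⟩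

/-- There is exactly one pair of positive reals `(s, b)` satisfying the
right-angled pentagon relations `sinh(s/2)·sinh(s/6) = cosh(b/4)` and
`sinh(s/4)·sinh(b/4) = cosh(s/2)`. -/
theorem pentagon_system_existsUnique :
    ∃! p : ℝ × ℝ, 0 < p.1 ∧ 0 < p.2 ∧
      sinh (p.1 / 2) * sinh (p.1 / 6) = cosh (p.2 / 4) ∧
      sinh (p.1 / 4) * sinh (p.2 / 4) = cosh (p.1 / 2) := by
  obtain ⟨s, ⟨hs, hs0⟩, hs_unique⟩ := existsUnique_pentagonPoly_cosh_eq_zero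
  refine ⟨(s, 4 * arsinh (cosh (s / 2) / sinh (s / 4))),
    ⟨hs, (pentagon_system_iff hs).2 ⟨hs0, rfl⟩⟩, ?_⟩
  rintro ⟨t, b⟩ ⟨ht, hsys⟩
  dsimp only at ht hsys
  obtain ⟨ht0, rfl⟩ := (pentagon_system_iff ht).1 hsys
  obtain rfl := hs_unique t ⟨ht, ht0⟩
  rfl
end

section
/- Let (s, b) be a pair of positive real numbers satisfying sinh(s/2)·sinh(s/6) = cosh(b/4) and sinh(s/4)·sinh(b/4) = cosh(s/2). Then 4.3 < s < 4.5 and 7.7 < b < 7.9; in particular b > s. -/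
open Real

/- Auxiliary: rational lower/upper bounds for `exp` via `(1 ± x/n)^(±n)`. -/
private lemma pentagon_exp_lb (x : ℝ) (n : ℕ) (hx : 0 ≤ x) (hn : 0 < n) :
    (1 + x/n)^n ≤ exp x := by
  have hn' : (0:ℝ) < n := by exact_mod_cast hn
  have h1 : (0:ℝ) ≤ 1 + x/n := by positivity
  have h2 : 1 + x/n ≤ exp (x/n) := by linarith [Real.add_one_le_exp (x/n)]
  calc (1 + x/n)^n ≤ (exp (x/n))^n := pow_le_pow_left₀ h1 h2 n
    _ = exp (n * (x/n)) := (Real.exp_nat_mul _ n).symm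
    _ = exp x := by rw [mul_div_cancel₀]; exact ne_of_gt hn'

private lemma pentagon_exp_ub (x : ℝ) (n : ℕ) (hx : 0 ≤ x) (h : x < n) :
    exp x ≤ ((1 - x/n)⁻¹)^n := by
  have hn' : (0:ℝ) < n := lt_of_le_of_lt hx h
  have h0 : 0 < 1 - x/n := by
    rw [sub_pos, div_lt_one hn']; exact h
  have h2 : exp (x/n) ≤ (1 - x/n)⁻¹ := by
    rw [le_inv_comm₀ (exp_pos _) h0]
    calc 1 - x/n ≤ exp (-(x/n)) := by linarith [Real.add_one_le_exp (-(x/n))]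
      _ = (exp (x/n))⁻¹ := Real.exp_neg _
  calc exp x = exp (n * (x/n)) := by rw [mul_div_cancel₀]; exact ne_of_gt hn'
    _ = (exp (x/n))^n := Real.exp_nat_mul _ n
    _ ≤ ((1 - x/n)⁻¹)^n := pow_le_pow_left₀ (exp_pos _).le h2 n

private lemma pentagon_cosh_ub (x : ℝ) (n : ℕ) (hx : 0 ≤ x) (h : x < n) (hn : 0 < n) :
    cosh x ≤ (((1 - x/n)⁻¹)^n + ((1 + x/n)^n)⁻¹)/2 := by
  rw [Real.cosh_eq]
  have h1 := pentagon_exp_ub x n hx h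
  have h2 := pentagon_exp_lb x n hx hn
  have h3 : exp (-x) ≤ ((1 + x/n)^n)⁻¹ := by
    rw [Real.exp_neg]
    exact inv_anti₀ (by positivity) h2
  linarith

private lemma pentagon_cosh_lb (x : ℝ) (n : ℕ) (hx : 0 ≤ x) (h : x < n) (hn : 0 < n) :
    ((1 + x/n)^n + (1 - x/n)^n)/2 ≤ cosh x := by
  rw [Real.cosh_eq]
  have h2 := pentagon_exp_lb x n hx hn
  have h1 := pentagon_exp_ub x n hx h
  have h3 : (1 - x/n)^n ≤ exp (-x) := by
    rw [Real.exp_neg]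
    have h4 := inv_anti₀ (exp_pos x) h1
    rwa [← inv_pow, inv_inv] at h4
  linarith

private lemma pentagon_E1 : cosh (43/60:ℝ) < 32/25 := by
  have h := pentagon_cosh_ub (43/60) 64 (by norm_num) (by norm_num) (by norm_num)
  have h' : (((1 - (43/60:ℝ)/(64:ℕ))⁻¹)^64 + ((1 + (43/60:ℝ)/(64:ℕ))^64)⁻¹)/2 < 32/25 := by
    norm_num
  linarith

private lemma pentagon_E2 : (1601/1250:ℝ) < cosh (3/4) := by
  have h := pentagon_cosh_lb (3/4) 64 (by norm_num) (by norm_num) (by norm_num)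
  have h' : (1601/1250:ℝ) < (((1 + (3/4:ℝ)/(64:ℕ))^64 + (1 - (3/4:ℝ)/(64:ℕ))^64))/2 := by
    norm_num
  linarith

private lemma pentagon_E3 : cosh (77/40:ℝ) ^ 2 < 12.5 := by
  have h := pentagon_cosh_ub (77/40) 256 (by norm_num) (by norm_num) (by norm_num)
  have h2 : (((1 - (77/40:ℝ)/(256:ℕ))⁻¹)^256 + ((1 + (77/40:ℝ)/(256:ℕ))^256)⁻¹)/2 < 3.53 := by
    norm_num
  have h3 : (0:ℝ) ≤ cosh (77/40) := (Real.cosh_pos (77/40)).le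
  nlinarith

private lemma pentagon_E4 : (12.8:ℝ) < cosh (79/40) ^ 2 := by
  have h := pentagon_cosh_lb (79/40) 256 (by norm_num) (by norm_num) (by norm_num)
  have h2 : (3.578:ℝ) < (((1 + (79/40:ℝ)/(256:ℕ))^256 + (1 - (79/40:ℝ)/(256:ℕ))^256))/2 := by
    norm_num
  nlinarith


private lemma pentagon_polyA (x : ℝ) (hx1 : 1 < x) (hcon : x ≤ 32/25)
    (key : (4*x^3 - 3*x - 1)/2 * (((4*x^3 - 3*x)^2 - 1) * (x^2 - 1) - 1) = (4*x^3 - 3*x)^2) :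
    False := by
  nlinarith [key, mul_nonneg (mul_nonneg (sub_pos.mpr hx1).le (sub_pos.mpr hx1).le) (sub_nonneg.mpr hcon),
    mul_nonneg (pow_pos (sub_pos.mpr hx1) 2).le (sub_nonneg.mpr hcon),
    mul_nonneg (pow_pos (sub_pos.mpr hx1) 3).le (sub_nonneg.mpr hcon),
    mul_nonneg (pow_pos (sub_pos.mpr hx1) 4).le (sub_nonneg.mpr hcon),
    mul_nonneg (pow_pos (sub_pos.mpr hx1) 5).le (sub_nonneg.mpr hcon),
    mul_nonneg (pow_pos (sub_pos.mpr hx1) 6).le (sub_nonneg.mpr hcon),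
    mul_nonneg (pow_pos (sub_pos.mpr hx1) 7).le (sub_nonneg.mpr hcon),
    mul_nonneg (pow_pos (sub_pos.mpr hx1) 8).le (sub_nonneg.mpr hcon),
    mul_nonneg (pow_pos (sub_pos.mpr hx1) 9).le (sub_nonneg.mpr hcon),
    mul_nonneg (pow_pos (sub_pos.mpr hx1) 10).le (sub_nonneg.mpr hcon)]

private lemma pentagon_polyB (x : ℝ) (hcon : 1601/1250 ≤ x)
    (key : (4*x^3 - 3*x - 1)/2 * (((4*x^3 - 3*x)^2 - 1) * (x^2 - 1) - 1) = (4*x^3 - 3*x)^2) :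
    False := by
  have h0 : (0:ℝ) ≤ x - 1601/1250 := by linarith
  nlinarith [key, pow_nonneg h0 2, pow_nonneg h0 3, pow_nonneg h0 4, pow_nonneg h0 5,
    pow_nonneg h0 6, pow_nonneg h0 7, pow_nonneg h0 8, pow_nonneg h0 9,
    pow_nonneg h0 10, pow_nonneg h0 11]

private lemma pentagon_polyC (x : ℝ) (h1 : 32/25 < x) (h2 : x < 1601/1250) :
    12.5 < ((4*x^3 - 3*x)^2 - 1) * (x^2 - 1) ∧ ((4*x^3 - 3*x)^2 - 1) * (x^2 - 1) < 12.8 := by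
  constructor
  · nlinarith [pow_pos (show (0:ℝ) < x - 32/25 by linarith) 2,
      pow_pos (show (0:ℝ) < x - 32/25 by linarith) 3,
      pow_pos (show (0:ℝ) < x - 32/25 by linarith) 4,
      pow_pos (show (0:ℝ) < x - 32/25 by linarith) 5,
      pow_pos (show (0:ℝ) < x - 32/25 by linarith) 6,
      pow_pos (show (0:ℝ) < x - 32/25 by linarith) 7,
      pow_pos (show (0:ℝ) < x - 32/25 by linarith) 8]
  · nlinarith [pow_pos (show (0:ℝ) < 1601/1250 - x by linarith) 2,
      pow_pos (show (0:ℝ) < 1601/1250 - x by linarith) 3,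
      pow_pos (show (0:ℝ) < 1601/1250 - x by linarith) 4,
      pow_pos (show (0:ℝ) < 1601/1250 - x by linarith) 5,
      pow_pos (show (0:ℝ) < 1601/1250 - x by linarith) 6,
      pow_pos (show (0:ℝ) < 1601/1250 - x by linarith) 7,
      pow_pos (show (0:ℝ) < 1601/1250 - x by linarith) 8]

/-- Any pair of positive reals `(s, b)` satisfying the pentagon relations
`sinh(s/2)·sinh(s/6) = cosh(b/4)` and `sinh(s/4)·sinh(b/4) = cosh(s/2)` satisfies
`4.3 < s < 4.5` and `7.7 < b < 7.9`; in particular `b > s`. -/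
theorem pentagon_system_bounds (s b : ℝ) (hs : 0 < s) (hb : 0 < b)
    (h1 : sinh (s / 2) * sinh (s / 6) = cosh (b / 4))
    (h2 : sinh (s / 4) * sinh (b / 4) = cosh (s / 2)) :
    (4.3 < s ∧ s < 4.5) ∧ (7.7 < b ∧ b < 7.9) ∧ s < b := by
  have hx1 : 1 < (cosh (s/6)) := Real.one_lt_cosh.mpr (ne_of_gt (by positivity))
  have hy : cosh (s/2) = 4*(cosh (s/6))^3 - 3*(cosh (s/6)) := by
    rw [show s/2 = 3*(s/6) by ring, Real.cosh_three_mul]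
  have hhalf : cosh (s/2) = 2 * cosh (s/4)^2 - 1 := by
    rw [show s/2 = 2*(s/4) by ring, Real.cosh_two_mul, Real.sinh_sq]; ring
  have hs4 : sinh (s/4)^2 = (cosh (s/2) - 1)/2 := by
    rw [Real.sinh_sq, hhalf]; ring
  have hb4sq : sinh (b/4)^2 = (cosh (s/2)^2 - 1) * ((cosh (s/6))^2 - 1) - 1 := by
    rw [Real.sinh_sq, ← h1, mul_pow, Real.sinh_sq, Real.sinh_sq]
  have key : (cosh (s/2) - 1)/2 * ((cosh (s/2)^2 - 1) * ((cosh (s/6))^2 - 1) - 1) = cosh (s/2)^2 := by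
    rw [← hs4, ← hb4sq, ← mul_pow, h2]
  rw [hy] at key
  -- bounds on (cosh (s/6))
  have hxlo : 32/25 < (cosh (s/6)) := by
    by_contra hcon
    push_neg at hcon
    exact pentagon_polyA (cosh (s/6)) hx1 hcon (by linear_combination key)
  have hxhi : (cosh (s/6)) < 1601/1250 := by
    by_contra hcon
    push_neg at hcon
    exact pentagon_polyB (cosh (s/6)) hcon (by linear_combination key)
  -- s bounds
  have hs43 : 4.3 < s := by
    have hc : cosh (43/60:ℝ) < cosh (s/6) := lt_trans pentagon_E1 hxlo
    have := Real.cosh_lt_cosh.mp hc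
    rw [abs_of_pos (by norm_num), abs_of_pos (by positivity)] at this
    norm_num at this ⊢
    linarith
  have hs45 : s < 4.5 := by
    have hc : cosh (s/6) < cosh (3/4:ℝ) := lt_trans hxhi pentagon_E2
    have := Real.cosh_lt_cosh.mp hc
    rw [abs_of_pos (by positivity), abs_of_pos (by norm_num)] at this
    norm_num at this ⊢
    linarith
  -- b bounds
  have hcb : cosh (b/4)^2 = ((4*(cosh (s/6))^3 - 3*(cosh (s/6)))^2 - 1) * ((cosh (s/6))^2 - 1) := by
    rw [← h1, mul_pow, Real.sinh_sq, Real.sinh_sq, hy]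
  have hblo2 : (12.5:ℝ) < cosh (b/4)^2 := by
    rw [hcb]; exact (pentagon_polyC (cosh (s/6)) hxlo hxhi).1
  have hbhi2 : cosh (b/4)^2 < 12.8 := by
    rw [hcb]; exact (pentagon_polyC (cosh (s/6)) hxlo hxhi).2
  have hb77 : 7.7 < b := by
    have hc : cosh (77/40:ℝ) < cosh (b/4) := by
      nlinarith [pentagon_E3, Real.cosh_pos (77/40:ℝ), Real.cosh_pos (b/4)]
    have := Real.cosh_lt_cosh.mp hc
    rw [abs_of_pos (by norm_num), abs_of_pos (by positivity)] at this
    norm_num at this ⊢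
    linarith
  have hb79 : b < 7.9 := by
    have hc : cosh (b/4) < cosh (79/40:ℝ) := by
      nlinarith [pentagon_E4, Real.cosh_pos (79/40:ℝ), Real.cosh_pos (b/4)]
    have := Real.cosh_lt_cosh.mp hc
    rw [abs_of_pos (by positivity), abs_of_pos (by norm_num)] at this
    norm_num at this ⊢
    linarith
  exact ⟨⟨hs43, hs45⟩, ⟨hb77, hb79⟩, by linarith⟩
end

section
/- For every integer D ≥ 3 there exist constants A ≥ 1 and B ≥ 0 (depending only on D) such that every finite connected simple graph G in which every vertex has degree at most D is (A,B)-quasi-isometric to some finite connected simple graph H in which every vertex has degree exactly 3. -/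
/-!
Number the edges at each vertex `v` of `G` by ports `ι v u : Fin D`, injectively; this is
possible because the degrees are at most `D`. Replace `v` by a cycle of length `2 * D` whose
slots come in `D` pairs, one pair per port. If port `i` of `v` leads to `u`, the two slots of `i`
are matched with the two slots at `u` of the port leading back to `v`; an unused port has its two
slots matched with each other, which is why ports are doubled. The matching is a fixed-point-free
involution avoiding cycle edges (antipodal slots are not adjacent once `D ≥ 2`), so the result is
cubic. Projecting to `G` is `1`-Lipschitz, `v ↦ (v, 0)` is `(4D+1)`-Lipschitz since every edge of
`G` is realised by a path through two cycles, and every vertex lies within `2D` of the image.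
-/

namespace SimpleGraph

variable {V W : Type*} {G : SimpleGraph V} {H : SimpleGraph W}

theorem Reachable.edist_le_mul_edist_of_adj {f : V → W} {K : ℕ∞}
    (hf : ∀ a b, G.Adj a b → H.edist (f a) (f b) ≤ K) {x y : V} (hxy : G.Reachable x y) :
    H.edist (f x) (f y) ≤ K * G.edist x y := by
  suffices key : ∀ {a b : V} (p : G.Walk a b), H.edist (f a) (f b) ≤ K * p.length by
    obtain ⟨p, hp⟩ := hxy.exists_walk_length_eq_edist
    exact hp ▸ key p
  intro a b p
  induction p with
  | nil => simp
  | @cons a c b hadj p ih =>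
    calc H.edist (f a) (f b) ≤ H.edist (f a) (f c) + H.edist (f c) (f b) := H.edist_triangle
      _ ≤ K + K * p.length := add_le_add (hf a c hadj) ih
      _ = K * (p.cons hadj).length := by push_cast [Walk.length_cons]; ring

theorem Reachable.edist_lt_card [Fintype V] {u v : V} (h : G.Reachable u v) :
    G.edist u v < Fintype.card V := by
  obtain ⟨p, hp, hlen⟩ := h.exists_path_of_dist
  rw [← h.coe_dist_eq_edist, ← hlen]
  exact_mod_cast hp.length_lt

theorem neighborSet_fromRel_of_involutive {σ : V → V} (hσ : Function.Involutive σ)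
    (hfix : ∀ v, σ v ≠ v) (v : V) : (fromRel fun a b => σ a = b).neighborSet v = {σ v} := by
  ext w
  simp only [mem_neighborSet, fromRel_adj, Set.mem_singleton_iff]
  constructor
  · rintro ⟨-, h | h⟩
    · exact h.symm
    · rw [← h, hσ]
  · rintro rfl
    exact ⟨(hfix v).symm, Or.inl rfl⟩

theorem ncard_neighborSet_sup_fromRel_of_involutive {C : SimpleGraph V} {σ : V → V}
    (hσ : Function.Involutive σ) (hfix : ∀ v, σ v ≠ v) (hC : ∀ v, ¬C.Adj v (σ v)) (v : V)
    (hfin : (C.neighborSet v).Finite) :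
    ((C ⊔ fromRel fun a b => σ a = b).neighborSet v).ncard = (C.neighborSet v).ncard + 1 := by
  rw [neighborSet_sup, neighborSet_fromRel_of_involutive hσ hfix, Set.ncard_union_eq
    (s := C.neighborSet v) (Set.disjoint_singleton_right.mpr (hC v)) hfin (Set.finite_singleton _),
    Set.ncard_singleton]

theorem ncard_neighborSet_bot_boxProd (x : V × W) :
    ((⊥ □ H).neighborSet x).ncard = (H.neighborSet x.2).ncard := by
  rw [neighborSet_boxProd, neighborSet_bot, Set.empty_prod, Set.empty_union,
    Set.ncard_prod, Set.ncard_singleton, one_mul]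

theorem ncard_neighborSet_cycleGraph {n : ℕ} (hn : 3 ≤ n) (v : Fin n) :
    ((cycleGraph n).neighborSet v).ncard = 2 := by
  obtain ⟨n, rfl⟩ := Nat.exists_eq_add_of_le' hn
  rw [Set.ncard_eq_toFinset_card', ← neighborFinset_def, card_neighborFinset_eq_degree,
    cycleGraph_degree_three_le]

theorem cycleGraph_not_adj_of_val_add {n : ℕ} (hn : 2 ≤ n) {a b : Fin (2 * n)}
    (h : a.val + n = b.val) : ¬(cycleGraph (2 * n)).Adj a b := by
  have hba : (b - a).val = n := by rw [Fin.sub_val_of_le (Fin.le_def.mpr (by omega))]; omega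
  have hab : (a - b).val = n := by rw [Fin.coe_sub_iff_lt.mpr (Fin.lt_def.mpr (by omega))]; omega
  rw [cycleGraph_adj', hab, hba]
  omega

theorem cycleGraph_not_adj_mkDivMod_add_one {n : ℕ} (hn : 2 ≤ n) (s : Fin 2) (i : Fin n) :
    ¬(cycleGraph (2 * n)).Adj (Fin.mkDivMod s i) (Fin.mkDivMod (s + 1) i) := by
  fin_cases s
  · exact cycleGraph_not_adj_of_val_add hn (by simp [add_comm])
  · exact fun h => cycleGraph_not_adj_of_val_add hn (by simp [add_comm]) h.symm

theorem exists_injOn_neighborSet {D : ℕ} [NeZero D]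
    (hdeg : ∀ v, (G.neighborSet v).encard ≤ D) :
    ∃ ι : V → V → Fin D, ∀ v, Set.InjOn (ι v) (G.neighborSet v) := by
  have (v : V) : ∃ f : V → Fin D, Set.InjOn f (G.neighborSet v) := by
    obtain ⟨f, -, hf⟩ := (Set.finite_of_encard_le_coe (hdeg v)).exists_injOn_of_encard_le
      (t := (Set.univ : Set (Fin D))) (by simpa using hdeg v)
    exact ⟨f, hf⟩
  choose ι hι using this
  exact ⟨ι, hι⟩

section TrivalentModel

variable (G) {D : ℕ} (ι : V → V → Fin D)

open scoped Classical in
/-- Slot `j` of the cycle over `v` is copy `j.divNat : Fin 2` of port `j.modNat : Fin D`. -/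
noncomputable def portPartner (p : V × Fin (2 * D)) : V × Fin (2 * D) :=
  if h : ∃ u, G.Adj p.1 u ∧ ι p.1 u = p.2.modNat then
    (h.choose, Fin.mkDivMod p.2.divNat (ι h.choose p.1))
  else (p.1, Fin.mkDivMod (p.2.divNat + 1) p.2.modNat)

def trivalentModel : SimpleGraph (V × Fin (2 * D)) :=
  (⊥ □ cycleGraph (2 * D)) ⊔ fromRel fun p q => portPartner G ι p = q

variable {G ι}

theorem portPartner_of_adj (hι : ∀ v, Set.InjOn (ι v) (G.neighborSet v)) {v u : V}
    (huv : G.Adj v u) {j : Fin (2 * D)} (hj : j.modNat = ι v u) :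
    portPartner G ι (v, j) = (u, Fin.mkDivMod j.divNat (ι u v)) := by
  have h : ∃ u, G.Adj v u ∧ ι v u = j.modNat := ⟨u, huv, hj.symm⟩
  have hu : h.choose = u := hι v h.choose_spec.1 huv (h.choose_spec.2.trans hj)
  rw [portPartner, dif_pos h, hu]

theorem portPartner_of_forall_ne {v : V} {j : Fin (2 * D)}
    (h : ∀ u, G.Adj v u → ι v u ≠ j.modNat) :
    portPartner G ι (v, j) = (v, Fin.mkDivMod (j.divNat + 1) j.modNat) := by
  rw [portPartner, dif_neg]
  push Not
  exact h

theorem portPartner_fst_eq_or_adj (p : V × Fin (2 * D)) :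
    (portPartner G ι p).1 = p.1 ∨ G.Adj p.1 (portPartner G ι p).1 := by
  unfold portPartner
  split_ifs with h
  · exact Or.inr h.choose_spec.1
  · exact Or.inl rfl

theorem involutive_portPartner (hι : ∀ v, Set.InjOn (ι v) (G.neighborSet v)) :
    Function.Involutive (portPartner G ι) := by
  rintro ⟨v, j⟩
  by_cases h : ∃ u, G.Adj v u ∧ ι v u = j.modNat
  · obtain ⟨u, huv, hj⟩ := h
    rw [portPartner_of_adj hι huv hj.symm, portPartner_of_adj hι huv.symm (by simp)]
    simp [hj]
  · push Not at h
    have side_add_two : ∀ s : Fin 2, s + 1 + 1 = s := by decide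
    rw [portPartner_of_forall_ne h, portPartner_of_forall_ne (by simpa using h)]
    simp [side_add_two]

theorem portPartner_ne (p : V × Fin (2 * D)) : portPartner G ι p ≠ p := by
  unfold portPartner
  split_ifs with h
  · exact fun he => G.ne_of_adj h.choose_spec.1 (congrArg Prod.fst he).symm
  · intro he
    have := congrArg (fun q => q.2.divNat) he
    simp at this

theorem not_adj_portPartner (hD : 2 ≤ D) (p : V × Fin (2 * D)) :
    ¬(⊥ □ cycleGraph (2 * D)).Adj p (portPartner G ι p) := by
  obtain ⟨v, j⟩ := p
  unfold portPartner
  simp only [boxProd_adj, bot_adj, false_and, false_or, not_and]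
  split_ifs with h
  · exact fun _ hv => G.ne_of_adj h.choose_spec.1 hv
  · intro hadj _
    refine cycleGraph_not_adj_mkDivMod_add_one hD j.divNat j.modNat ?_
    rwa [Fin.divNat_mkDivMod_modNat]

theorem ncard_neighborSet_trivalentModel (hι : ∀ v, Set.InjOn (ι v) (G.neighborSet v))
    (hD : 2 ≤ D) (p : V × Fin (2 * D)) : ((trivalentModel G ι).neighborSet p).ncard = 3 := by
  have hC : ((⊥ □ cycleGraph (2 * D)).neighborSet p).ncard = 2 := by
    rw [ncard_neighborSet_bot_boxProd, ncard_neighborSet_cycleGraph (by omega)]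
  rw [trivalentModel, ncard_neighborSet_sup_fromRel_of_involutive (involutive_portPartner hι)
    portPartner_ne (not_adj_portPartner hD) p (Set.finite_of_ncard_ne_zero (by omega)), hC]

theorem adj_or_eq_of_trivalentModel_adj {p q : V × Fin (2 * D)}
    (h : (trivalentModel G ι).Adj p q) :
    G.Adj p.1 q.1 ∨ p.1 = q.1 := by
  rcases h with h | ⟨-, rfl | rfl⟩
  · simp only [boxProd_adj, bot_adj, false_and, false_or] at h
    exact Or.inr h.2
  · exact (portPartner_fst_eq_or_adj p).symm.imp id Eq.symm
  · exact (portPartner_fst_eq_or_adj q).symm.imp Adj.symm id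

theorem edist_trivalentModel_fiber_le (v : V) (a b : Fin (2 * D)) :
    (trivalentModel G ι).edist (v, a) (v, b) ≤ (2 * D : ℕ) := by
  have hstep : ∀ a b, (cycleGraph (2 * D)).Adj a b →
      (trivalentModel G ι).edist (v, a) (v, b) ≤ 1 := fun a b h =>
    edist_le_one_iff_adj_or_eq.mpr (Or.inl (Or.inl (boxProd_adj_right.mpr h)))
  calc (trivalentModel G ι).edist (v, a) (v, b)
      ≤ 1 * (cycleGraph (2 * D)).edist a b :=
        (cycleGraph_preconnected a b).edist_le_mul_edist_of_adj hstep
    _ ≤ (2 * D : ℕ) := by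
      rw [one_mul]
      exact_mod_cast ((cycleGraph_preconnected a b).edist_lt_card.trans_eq (by simp)).le

theorem dist_trivalentModel_fiber_le (v : V) (a b : Fin (2 * D)) :
    (trivalentModel G ι).dist (v, a) (v, b) ≤ 2 * D :=
  ENat.toNat_le_of_le_natCast (edist_trivalentModel_fiber_le v a b)

theorem adj_trivalentModel_of_adj (hι : ∀ v, Set.InjOn (ι v) (G.neighborSet v)) {v u : V}
    (huv : G.Adj v u) : (trivalentModel G ι).Adj (v, Fin.mkDivMod (0 : Fin 2) (ι v u))
      (u, Fin.mkDivMod (0 : Fin 2) (ι u v)) := by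
  refine Or.inr ⟨fun h => G.ne_of_adj huv (congrArg Prod.fst h), Or.inl ?_⟩
  simpa using portPartner_of_adj hι huv (j := Fin.mkDivMod (0 : Fin 2) (ι v u)) (by simp)

variable [NeZero D]

theorem edist_trivalentModel_le_of_adj (hι : ∀ v, Set.InjOn (ι v) (G.neighborSet v))
    {v u : V} (huv : G.Adj v u) :
    (trivalentModel G ι).edist (v, 0) (u, 0) ≤ 4 * D + 1 := by
  set H := trivalentModel G ι
  set a := Fin.mkDivMod (0 : Fin 2) (ι v u)
  set b := Fin.mkDivMod (0 : Fin 2) (ι u v)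
  calc H.edist (v, 0) (u, 0)
      ≤ H.edist (v, 0) (v, a) + (H.edist (v, a) (u, b) + H.edist (u, b) (u, 0)) :=
        H.edist_triangle.trans (add_le_add_right H.edist_triangle _)
    _ ≤ (2 * D : ℕ) + (1 + (2 * D : ℕ)) := by
      gcongr
      · exact edist_trivalentModel_fiber_le v 0 a
      · exact (edist_eq_one_iff_adj.mpr (adj_trivalentModel_of_adj hι huv)).le
      · exact edist_trivalentModel_fiber_le u b 0
    _ = 4 * D + 1 := by push_cast; ring

theorem edist_trivalentModel_le (hι : ∀ v, Set.InjOn (ι v) (G.neighborSet v)) {x y : V}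
    (hxy : G.Reachable x y) :
    (trivalentModel G ι).edist (x, 0) (y, 0) ≤ (4 * D + 1) * G.edist x y :=
  hxy.edist_le_mul_edist_of_adj fun _ _ h => edist_trivalentModel_le_of_adj hι h

theorem trivalentModel_connected (hι : ∀ v, Set.InjOn (ι v) (G.neighborSet v))
    (hG : G.Connected) : (trivalentModel G ι).Connected := by
  obtain ⟨v₀⟩ := hG.nonempty
  refine (connected_iff_exists_forall_reachable _).mpr ⟨(v₀, 0), fun ⟨v, a⟩ => ?_⟩
  have hbase : (trivalentModel G ι).Reachable (v₀, 0) (v, 0) := by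
    refine reachable_of_edist_ne_top
      (ne_top_of_le_ne_top ?_ (edist_trivalentModel_le hι (hG v₀ v)))
    rw [← (hG v₀ v).coe_dist_eq_edist]
    exact_mod_cast ENat.natCast_ne_top ((4 * D + 1) * G.dist v₀ v)
  have hfiber : (trivalentModel G ι).Reachable (v, 0) (v, a) := reachable_of_edist_ne_top
    (ne_top_of_le_ne_top (ENat.natCast_ne_top _) (edist_trivalentModel_fiber_le v 0 a))
  exact hbase.trans hfiber

theorem dist_trivalentModel_le (hι : ∀ v, Set.InjOn (ι v) (G.neighborSet v))
    (hG : G.Connected) (x y : V) :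
    (trivalentModel G ι).dist (x, 0) (y, 0) ≤ (4 * D + 1) * G.dist x y := by
  apply ENat.toNat_le_of_le_natCast
  push_cast
  rw [(hG x y).coe_dist_eq_edist]
  exact edist_trivalentModel_le hι (hG x y)

theorem dist_le_dist_trivalentModel (hι : ∀ v, Set.InjOn (ι v) (G.neighborSet v))
    (hG : G.Connected) (p q : V × Fin (2 * D)) :
    G.dist p.1 q.1 ≤ (trivalentModel G ι).dist p q := by
  have hH := (trivalentModel_connected hι hG) p q
  have h := hH.edist_le_mul_edist_of_adj (K := 1) (f := Prod.fst) fun _ _ h =>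
    edist_le_one_iff_adj_or_eq.mpr (adj_or_eq_of_trivalentModel_adj h)
  rw [one_mul, ← (hG _ _).coe_dist_eq_edist, ← hH.coe_dist_eq_edist] at h
  exact_mod_cast h

end TrivalentModel

end SimpleGraph

open SimpleGraph

/-- For every `D ≥ 3` there are constants `A ≥ 1` and `B ≥ 0` (depending only
on `D`) such that every finite connected simple graph of maximum degree at most `D` is
`(A,B)`-quasi-isometric to some finite connected trivalent (cubic) simple graph. -/
theorem bounded_valence_graph_quasi_isometric_to_trivalent :
    ∀ D : ℕ, 3 ≤ D →
      ∃ A : ℝ, 1 ≤ A ∧ ∃ B : ℝ, 0 ≤ B ∧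
        ∀ (V : Type) [Fintype V] (G : SimpleGraph V),
          G.Connected → (∀ v : V, (G.neighborSet v).ncard ≤ D) →
          ∃ (W : Type) (_ : Fintype W) (H : SimpleGraph W),
            H.Connected ∧ (∀ w : W, (H.neighborSet w).ncard = 3) ∧
            ∃ f : V → W,
              (∀ x y : V,
                (1 / A) * (G.dist x y : ℝ) - B ≤ (H.dist (f x) (f y) : ℝ) ∧
                (H.dist (f x) (f y) : ℝ) ≤ A * (G.dist x y : ℝ) + B) ∧
              (∀ w : W, ∃ x : V, (H.dist (f x) w : ℝ) ≤ B) := by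
  intro D hD
  have hA : (1 : ℝ) ≤ 4 * D + 1 := by linarith [(Nat.cast_nonneg D : (0 : ℝ) ≤ D)]
  refine ⟨4 * D + 1, hA, 4 * D + 1, by linarith, fun V _ G hG hdeg => ?_⟩
  have : NeZero D := ⟨by omega⟩
  obtain ⟨ι, hι⟩ := exists_injOn_neighborSet (G := G) (D := D) fun v => by
    rw [← (Set.toFinite _).cast_ncard_eq]
    exact_mod_cast hdeg v
  refine ⟨_, inferInstance, trivalentModel G ι, trivalentModel_connected hι hG,
    ncard_neighborSet_trivalentModel hι (by omega), fun v => (v, 0),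
    fun x y => ⟨?_, ?_⟩, fun ⟨v, a⟩ => ⟨v, ?_⟩⟩
  · have hlow : (G.dist x y : ℝ) ≤ (trivalentModel G ι).dist (x, 0) (y, 0) := by
      exact_mod_cast dist_le_dist_trivalentModel hι hG (x, 0) (y, 0)
    have hshrink : 1 / (4 * D + 1 : ℝ) * G.dist x y ≤ G.dist x y :=
      mul_le_of_le_one_left (Nat.cast_nonneg _) (div_le_one_of_le₀ hA (by linarith))
    linarith
  · have hup : ((trivalentModel G ι).dist (x, 0) (y, 0) : ℝ) ≤ (4 * D + 1) * G.dist x y := by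
      exact_mod_cast dist_trivalentModel_le hι hG x y
    linarith
  · have hfiber : ((trivalentModel G ι).dist (v, 0) (v, a) : ℝ) ≤ 2 * D := by
      exact_mod_cast dist_trivalentModel_fiber_le v 0 a
    linarith
end
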